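/- Let G be the 3-SAT reinforcement construction (triangles {u_i, ū_i, v_i}, clause vertices c_j adjacent to their three literals, and a vertex s joined to all c_j), where no clause contains both a variable and its negation. Then r(G) = 1 if and only if the 3-SAT instance is satisfiable, where r(G) is the reinforcement number. -/
import Mathlib


/-- A literal over `n` variables: a variable index together with a polarity
(`true` = the positive literal `uᵢ`, `false` = the negated literal `ūᵢ`). -/
abbrev Lit (n : ℕ) := Fin n × Bool

/-- Vertex type of the reinforcement construction: literal vertices `uᵢ, ūᵢ`,
triangle apexes `vᵢ`, clause vertices `cⱼ`, and the single vertex `s`. -/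
abbrev RVert (n m : ℕ) := Lit n ⊕ (Fin n ⊕ (Fin m ⊕ Unit))

/-- The literal vertex `uᵢ` (if `b = true`) or `ūᵢ` (if `b = false`). -/
def rlit {n m : ℕ} (i : Fin n) (b : Bool) : RVert n m := Sum.inl (i, b)

/-- The triangle apex vertex `vᵢ`. -/
def rvv {n m : ℕ} (i : Fin n) : RVert n m := Sum.inr (Sum.inl i)

/-- The clause vertex `cⱼ`. -/
def rcv {n m : ℕ} (j : Fin m) : RVert n m := Sum.inr (Sum.inr (Sum.inl j))

/-- The vertex `s`. -/
def rsv {n m : ℕ} : RVert n m := Sum.inr (Sum.inr (Sum.inr ()))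

/-- Base adjacency relation of the reinforcement construction (symmetrized by
`fromRel`): triangle edges on `{uᵢ, ūᵢ, vᵢ}`, clause edges joining `cⱼ` to its
three literals, and the edges joining `s` to every `cⱼ`. -/
def reinfRel {n m : ℕ} (C : Fin m → Fin 3 → Lit n) : RVert n m → RVert n m → Prop
  | Sum.inl (i, b), Sum.inl (i', b') => i = i' ∧ b ≠ b'
  | Sum.inl (i, _), Sum.inr (Sum.inl i') => i = i'
  | Sum.inl l, Sum.inr (Sum.inr (Sum.inl j)) => ∃ k, C j k = l
  | Sum.inr (Sum.inr (Sum.inl _)), Sum.inr (Sum.inr (Sum.inr _)) => True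
  | _, _ => False

/-- The graph of the reinforcement construction associated with a 3-SAT instance `C`. -/
def reinfGraph {n m : ℕ} (C : Fin m → Fin 3 → Lit n) : SimpleGraph (RVert n m) :=
  SimpleGraph.fromRel (reinfRel C)

/-- `D` is a dominating set of `G`: every vertex not in `D` has a neighbor in `D`. -/
def IsDomSet {V : Type*} (G : SimpleGraph V) (D : Finset V) : Prop :=
  ∀ v, v ∉ D → ∃ u ∈ D, G.Adj u v

/-- The domination number of `G`: the minimum cardinality of a dominating set. -/
noncomputable def domNum {V : Type*} (G : SimpleGraph V) : ℕ :=
  sInf {k | ∃ D : Finset V, IsDomSet G D ∧ D.card = k}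

/-- The reinforcement number of `G`: the minimum number of non-edges whose
addition to `G` results in a graph with strictly smaller domination number. -/
noncomputable def reinforcement {V : Type*} (G : SimpleGraph V) : ℕ :=
  sInf {k | ∃ F : Finset (Sym2 V), (∀ e ∈ F, ¬ e.IsDiag ∧ e ∉ G.edgeSet) ∧
    F.card = k ∧ domNum (G ⊔ SimpleGraph.fromEdgeSet ↑F) < domNum G}

/-- The 3-SAT instance `C` is satisfiable: some truth assignment makes at least
one literal in every clause true. -/
def Satisfiable {n m : ℕ} (C : Fin m → Fin 3 → Lit n) : Prop :=
  ∃ t : Fin n → Bool, ∀ j : Fin m, ∃ k : Fin 3, t (C j k).1 = (C j k).2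

section Aux

variable {n m : ℕ}

/-- The group (disjoint closed-neighborhood block) of a vertex. -/
def grp : RVert n m → Fin n ⊕ Unit
  | Sum.inl (i, _) => Sum.inl i
  | Sum.inr (Sum.inl i) => Sum.inl i
  | Sum.inr (Sum.inr _) => Sum.inr ()

/-- The center of a group. -/
def cen : Fin n ⊕ Unit → RVert n m
  | Sum.inl i => rvv i
  | Sum.inr _ => rsv

lemma grp_cen (g : Fin n ⊕ Unit) : grp (cen (n := n) (m := m) g) = g := by
  cases g with
  | inl i => rfl
  | inr u => cases u; rfl

lemma grp_rlit (i : Fin n) (b : Bool) : grp (rlit (n := n) (m := m) i b) = Sum.inl i := rfl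
lemma grp_rvv (i : Fin n) : grp (rvv (n := n) (m := m) i) = Sum.inl i := rfl
lemma grp_rcv (j : Fin m) : grp (rcv (n := n) (m := m) j) = Sum.inr () := rfl
lemma grp_rsv : grp (rsv (n := n) (m := m)) = Sum.inr () := rfl

variable {C : Fin m → Fin 3 → Lit n}

lemma adj_rvv {u : RVert n m} {i : Fin n}
    (h : (reinfGraph C).Adj u (rvv i)) : ∃ b, u = rlit i b := by
  rw [reinfGraph, SimpleGraph.fromRel_adj] at h
  obtain ⟨hne, h | h⟩ := h
  · rcases u with ⟨i', b⟩ | (i'' | (j | u))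
    · have h' : i' = i := h
      exact ⟨b, by rw [rlit, h']⟩
    · exact (h : False).elim
    · exact (h : False).elim
    · exact (h : False).elim
  · rcases u with ⟨i', b⟩ | (i'' | (j | u))
    · exact (h : False).elim
    · exact (h : False).elim
    · exact (h : False).elim
    · exact (h : False).elim

lemma adj_rsv {u : RVert n m}
    (h : (reinfGraph C).Adj u rsv) : ∃ j, u = rcv j := by
  rw [reinfGraph, SimpleGraph.fromRel_adj] at h
  obtain ⟨hne, h | h⟩ := h
  · rcases u with ⟨i', b⟩ | (i'' | (j | u))
    · exact (h : False).elim
    · exact (h : False).elim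
    · exact ⟨j, rfl⟩
    · exact (h : False).elim
  · rcases u with ⟨i', b⟩ | (i'' | (j | u))
    · exact (h : False).elim
    · exact (h : False).elim
    · exact (h : False).elim
    · exact (h : False).elim

lemma adj_rcv {u : RVert n m} {j : Fin m}
    (h : (reinfGraph C).Adj u (rcv j)) :
    (∃ k, u = rlit (C j k).1 (C j k).2) ∨ u = rsv := by
  rw [reinfGraph, SimpleGraph.fromRel_adj] at h
  obtain ⟨hne, h | h⟩ := h
  · rcases u with ⟨i', b⟩ | (i'' | (j' | u))
    · obtain ⟨k, hk⟩ := (h : ∃ k, C j k = (i', b))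
      exact Or.inl ⟨k, by rw [rlit, hk]⟩
    · exact (h : False).elim
    · exact (h : False).elim
    · cases u; exact Or.inr rfl
  · rcases u with ⟨i', b⟩ | (i'' | (j' | u))
    · exact (h : False).elim
    · exact (h : False).elim
    · exact (h : False).elim
    · cases u; exact Or.inr rfl

lemma adj_rlit {u : RVert n m} {i : Fin n} {b : Bool}
    (h : (reinfGraph C).Adj u (rlit i b)) :
    u = rlit i (!b) ∨ u = rvv i ∨ ∃ j k, u = rcv j ∧ C j k = (i, b) := by
  rw [reinfGraph, SimpleGraph.fromRel_adj] at h
  obtain ⟨hne, h | h⟩ := h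
  · rcases u with ⟨i', b'⟩ | (i'' | (j | u))
    · obtain ⟨h1, h2⟩ := (h : i' = i ∧ b' ≠ b)
      have hb : b' = !b := by cases b <;> cases b' <;> simp_all
      exact Or.inl (by rw [rlit, h1, hb])
    · exact (h : False).elim
    · exact (h : False).elim
    · exact (h : False).elim
  · rcases u with ⟨i', b'⟩ | (i'' | (j | u))
    · obtain ⟨h1, h2⟩ := (h : i = i' ∧ b ≠ b')
      have hb : b' = !b := by cases b <;> cases b' <;> simp_all
      exact Or.inl (by rw [rlit, ← h1, hb])
    · exact Or.inr (Or.inl (by rw [rvv, (h : i = i'')]))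
    · obtain ⟨k, hk⟩ := (h : ∃ k, C j k = (i, b))
      exact Or.inr (Or.inr ⟨j, k, rfl, hk⟩)
    · exact (h : False).elim

end Aux
section Aux2

variable {n m : ℕ} {C : Fin m → Fin 3 → Lit n}

lemma cen_inj {g g' : Fin n ⊕ Unit} (h : cen (n := n) (m := m) g = cen g') : g = g' := by
  have := congrArg grp h
  rwa [grp_cen, grp_cen] at this

lemma adj_cen {u : RVert n m} {g : Fin n ⊕ Unit}
    (h : (reinfGraph C).Adj u (cen g)) : grp u = g := by
  cases g with
  | inl i =>
      obtain ⟨b, rfl⟩ := adj_rvv h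
      rfl
  | inr u' =>
      cases u'
      obtain ⟨j, rfl⟩ := adj_rsv h
      rfl

lemma domNum_le_of_isDomSet {V : Type*} {G : SimpleGraph V} {D : Finset V}
    (h : IsDomSet G D) : domNum G ≤ D.card := Nat.sInf_le ⟨D, h, rfl⟩

lemma isDomSet_univ {V : Type*} [Fintype V] (G : SimpleGraph V) :
    IsDomSet G Finset.univ := fun v hv => absurd (Finset.mem_univ v) hv

lemma exists_dom_card {V : Type*} [Fintype V] (G : SimpleGraph V) :
    ∃ D : Finset V, IsDomSet G D ∧ D.card = domNum G := by
  have hne : {k | ∃ D : Finset V, IsDomSet G D ∧ D.card = k}.Nonempty :=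
    ⟨Finset.univ.card, Finset.univ, isDomSet_univ G, rfl⟩
  exact Nat.sInf_mem hne

/-- Lower bound: every dominating set of the construction has at least `n+1` vertices. -/
lemma dom_lb {D : Finset (RVert n m)} (hD : IsDomSet (reinfGraph C) D) :
    n + 1 ≤ D.card := by
  classical
  have hsurj : ∀ g : Fin n ⊕ Unit, g ∈ D.image grp := by
    intro g
    by_cases h : cen g ∈ D
    · exact Finset.mem_image.mpr ⟨cen g, h, grp_cen g⟩
    · obtain ⟨u, hu, hadj⟩ := hD (cen g) h
      exact Finset.mem_image.mpr ⟨u, hu, adj_cen hadj⟩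
  calc n + 1 = (Finset.univ : Finset (Fin n ⊕ Unit)).card := by simp
    _ ≤ (D.image grp).card := Finset.card_le_card (fun g _ => hsurj g)
    _ ≤ D.card := Finset.card_image_le

/-- Main lemma: a small dominating set of `G + e` yields a satisfying assignment. -/
lemma main_sat (hC : ∀ j k k', (C j k).1 = (C j k').1 → (C j k).2 = (C j k').2)
    (e : Sym2 (RVert n m)) (D : Finset (RVert n m))
    (hD : IsDomSet (reinfGraph C ⊔ SimpleGraph.fromEdgeSet {e}) D)
    (hcard : D.card ≤ n) : Satisfiable C := by
  classical
  have hadj' : ∀ u v : RVert n m,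
      (reinfGraph C ⊔ SimpleGraph.fromEdgeSet {e}).Adj u v →
      (reinfGraph C).Adj u v ∨ s(u, v) = e := by
    intro u v h
    rcases h with h | h
    · exact Or.inl h
    · exact Or.inr (by simpa using h.1)
  obtain ⟨g₀, hg₀⟩ : ∃ g₀ : Fin n ⊕ Unit, g₀ ∉ D.image grp := by
    by_contra hcon
    push_neg at hcon
    have h1 : (Finset.univ : Finset (Fin n ⊕ Unit)).card ≤ (D.image grp).card :=
      Finset.card_le_card (fun g _ => hcon g)
    have h2 : (D.image grp).card ≤ n := le_trans Finset.card_image_le hcard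
    simp at h1
    omega
  have hg₀' : ∀ d ∈ D, grp d ≠ g₀ := fun d hd h => hg₀ (Finset.mem_image.mpr ⟨d, hd, h⟩)
  have hcen : cen g₀ ∉ D := fun h => hg₀' _ h (grp_cen g₀)
  obtain ⟨y, hy, hyadj⟩ := hD (cen g₀) hcen
  have hye : s(y, (cen g₀ : RVert n m)) = e := by
    rcases hadj' _ _ hyadj with h | h
    · exact absurd (adj_cen h) (hg₀' y hy)
    · exact h
  have hfull : ∀ g : Fin n ⊕ Unit, g ≠ g₀ → ∃ d ∈ D, grp d = g := by
    intro g hg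
    by_cases h : cen g ∈ D
    · exact ⟨cen g, h, grp_cen g⟩
    · obtain ⟨u, hu, huadj⟩ := hD (cen g) h
      rcases hadj' _ _ huadj with h' | h'
      · exact ⟨u, hu, adj_cen h'⟩
      · rw [← hye] at h'
        rcases Sym2.eq_iff.mp h' with ⟨h1, h2⟩ | ⟨h1, h2⟩
        · exact absurd (cen_inj h2) hg
        · exact ⟨y, hy, h2 ▸ grp_cen g⟩
  -- injectivity of `grp` on `D`
  have hsub : Finset.univ.erase g₀ ⊆ D.image grp := by
    intro g hg
    obtain ⟨d, hd, hdg⟩ := hfull g (Finset.ne_of_mem_erase hg)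
    exact Finset.mem_image.mpr ⟨d, hd, hdg⟩
  have hn_le : n ≤ (D.image grp).card := by
    have := Finset.card_le_card hsub
    have hcardE : (Finset.univ.erase g₀).card = n := by
      rw [Finset.card_erase_of_mem (Finset.mem_univ g₀)]
      simp
    omega
  have hinj : Set.InjOn grp (↑D : Set (RVert n m)) := by
    have h1 : (D.image grp).card ≤ D.card := Finset.card_image_le
    have h2 : (D.image grp).card = D.card := by omega
    exact Finset.card_image_iff.mp h2
  cases g₀ with
  | inl i₀ =>
      -- impossible case: gives a clause containing both polarities of `i₀`
      exfalso
      have key : ∀ b : Bool, ∃ j, rcv j ∈ D ∧ ∃ k, C j k = (i₀, b) := by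
        intro b
        have hnot : rlit i₀ b ∉ D := fun h => hg₀' _ h rfl
        obtain ⟨u, hu, huadj⟩ := hD (rlit i₀ b) hnot
        rcases hadj' _ _ huadj with h' | h'
        · rcases adj_rlit h' with h | h | ⟨j, k, hj, hk⟩
          · exact absurd (hg₀' u hu) (by rw [h]; simp [grp_rlit])
          · exact absurd (hg₀' u hu) (by rw [h]; simp [grp_rvv])
          · exact ⟨j, hj ▸ hu, k, hk⟩
        · rw [← hye] at h'
          rcases Sym2.eq_iff.mp h' with ⟨h1, h2⟩ | ⟨h1, h2⟩
          · exact absurd h2 (by simp [rlit, cen, rvv])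
          · exact absurd (hg₀' y hy) (by rw [← h2]; simp [grp_rlit])
      obtain ⟨j₁, hj₁, k₁, hk₁⟩ := key true
      obtain ⟨j₂, hj₂, k₂, hk₂⟩ := key false
      have hjj : j₁ = j₂ := by
        have h := hinj (Finset.mem_coe.mpr hj₁) (Finset.mem_coe.mpr hj₂)
          (by rw [grp_rcv, grp_rcv])
        simpa [rcv] using h
      subst hjj
      have hfst : (C j₁ k₁).1 = (C j₁ k₂).1 := by rw [hk₁, hk₂]
      have := hC j₁ k₁ k₂ hfst
      rw [hk₁, hk₂] at this
      exact absurd this (by simp)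
  | inr u₀ =>
      cases u₀
      refine ⟨fun i => decide (rlit i true ∈ D), fun j => ?_⟩
      have hnot : rcv j ∉ D := fun h => hg₀' _ h rfl
      obtain ⟨u, hu, huadj⟩ := hD (rcv j) hnot
      rcases hadj' _ _ huadj with h' | h'
      · rcases adj_rcv h' with ⟨k, hk⟩ | h
        · refine ⟨k, ?_⟩
          subst hk
          cases hb : (C j k).2 with
          | true =>
              rw [hb] at hu
              simp [hu]
          | false =>
              rw [hb] at hu
              have hnt : rlit (C j k).1 true ∉ D := by
                intro h
                have := hinj (Finset.mem_coe.mpr h) (Finset.mem_coe.mpr hu)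
                  (by rw [grp_rlit, grp_rlit])
                simp [rlit] at this
              simp [hnt]
        · exact absurd (hg₀' u hu) (by rw [h]; simp [grp_rsv])
      · rw [← hye] at h'
        rcases Sym2.eq_iff.mp h' with ⟨h1, h2⟩ | ⟨h1, h2⟩
        · exact absurd h2 (by simp [rcv, cen, rsv])
        · exact absurd (hg₀' y hy) (by rw [← h2]; simp [grp_rcv])

end Aux2
section Thm

variable {n m : ℕ} {C : Fin m → Fin 3 → Lit n}

/-- Upper bound: `{v₁,…,vₙ,s}` dominates the construction. -/
lemma dom_ub : domNum (reinfGraph C) ≤ n + 1 := by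
  classical
  set D : Finset (RVert n m) := Finset.univ.image rvv ∪ {rsv} with hDdef
  have hdom : IsDomSet (reinfGraph C) D := by
    intro v hv
    rcases v with ⟨i, b⟩ | (i | (j | u))
    · refine ⟨rvv i, ?_, ?_⟩
      · exact Finset.mem_union_left _ (Finset.mem_image.mpr ⟨i, Finset.mem_univ i, rfl⟩)
      · rw [reinfGraph, SimpleGraph.fromRel_adj]
        exact ⟨by simp [rvv], Or.inr (show (i : Fin n) = i from rfl)⟩
    · exact absurd (Finset.mem_union_left _
        (Finset.mem_image.mpr ⟨i, Finset.mem_univ i, rfl⟩)) hv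
    · refine ⟨rsv, Finset.mem_union_right _ (Finset.mem_singleton_self _), ?_⟩
      rw [reinfGraph, SimpleGraph.fromRel_adj]
      exact ⟨by simp [rsv, rcv], Or.inr trivial⟩
    · cases u
      exact absurd (Finset.mem_union_right _ (Finset.mem_singleton_self _)) hv
  have hcard : D.card ≤ n + 1 := by
    calc D.card ≤ (Finset.univ.image (rvv (n := n) (m := m))).card + ({rsv} : Finset (RVert n m)).card :=
          Finset.card_union_le _ _
      _ ≤ n + 1 := by
          have h1 : (Finset.univ.image (rvv (n := n) (m := m))).card ≤ n := by
            calc (Finset.univ.image (rvv (n := n) (m := m))).card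
                ≤ (Finset.univ : Finset (Fin n)).card := Finset.card_image_le
              _ = n := by simp
          simp only [Finset.card_singleton]
          omega
  exact le_trans (domNum_le_of_isDomSet hdom) hcard

lemma zero_notin_reinfSet {V : Type*} (G : SimpleGraph V) :
    0 ∉ {k | ∃ F : Finset (Sym2 V), (∀ e ∈ F, ¬ e.IsDiag ∧ e ∉ G.edgeSet) ∧
      F.card = k ∧ domNum (G ⊔ SimpleGraph.fromEdgeSet ↑F) < domNum G} := by
  rintro ⟨F, -, hF0, hlt⟩
  rw [Finset.card_eq_zero] at hF0
  subst hF0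
  simp only [Finset.coe_empty, SimpleGraph.fromEdgeSet_empty, sup_bot_eq] at hlt
  exact lt_irrefl _ hlt

/-- In the reinforcement construction (for a 3-SAT instance in which no clause
contains both a variable and its negation), `r(G) = 1` iff the 3-SAT instance
is satisfiable. -/
theorem reinfGraph_reinforcement_one_iff_satisfiable {n m : ℕ}
    (C : Fin m → Fin 3 → Lit n) (hn : 0 < n)
    (hC : ∀ j k k', (C j k).1 = (C j k').1 → (C j k).2 = (C j k').2) :
    reinforcement (reinfGraph C) = 1 ↔ Satisfiable C := by

  classical
  set S := {k | ∃ F : Finset (Sym2 (RVert n m)),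
    (∀ e ∈ F, ¬ e.IsDiag ∧ e ∉ (reinfGraph C).edgeSet) ∧
    F.card = k ∧ domNum (reinfGraph C ⊔ SimpleGraph.fromEdgeSet ↑F) < domNum (reinfGraph C)}
    with hS
  have h0 : 0 ∉ S := zero_notin_reinfSet (reinfGraph C)
  constructor
  · intro h1
    have hSne : S.Nonempty := by
      by_contra hcon
      rw [Set.not_nonempty_iff_eq_empty] at hcon
      rw [reinforcement, ← hS, hcon, Nat.sInf_empty] at h1
      exact absurd h1 (by omega)
    have hmem : 1 ∈ S := by
      have := Nat.sInf_mem hSne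
      rw [← hS] at *
      rwa [show sInf S = 1 from h1] at this
    obtain ⟨F, hFgood, hF1, hlt⟩ := hmem
    obtain ⟨e, rfl⟩ := Finset.card_eq_one.mp hF1
    obtain ⟨D, hDdom, hDcard⟩ := exists_dom_card
      (reinfGraph C ⊔ SimpleGraph.fromEdgeSet ↑({e} : Finset (Sym2 (RVert n m))))
    have hle : D.card ≤ n := by
      have h2 : domNum (reinfGraph C) ≤ n + 1 := dom_ub
      omega
    rw [Finset.coe_singleton] at hDdom
    exact main_sat hC e D hDdom hle
  · rintro ⟨t, ht⟩
    set i₀ : Fin n := ⟨0, hn⟩ with hi₀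
    set e : Sym2 (RVert n m) := s(rsv, rlit i₀ (t i₀)) with he
    -- the small dominating set after adding e
    set D : Finset (RVert n m) := Finset.univ.image (fun i => rlit i (t i)) with hDdef
    have hDcard : D.card ≤ n := by
      calc D.card ≤ (Finset.univ : Finset (Fin n)).card := Finset.card_image_le
        _ = n := by simp
    have hDdom : IsDomSet (reinfGraph C ⊔ SimpleGraph.fromEdgeSet {e}) D := by
      intro v hv
      rcases v with ⟨i, b⟩ | (i | (j | u))
      · have hbne : b ≠ t i := by
          intro hb
          subst hb
          exact hv (Finset.mem_image.mpr ⟨i, Finset.mem_univ i, rfl⟩)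
        refine ⟨rlit i (t i), Finset.mem_image.mpr ⟨i, Finset.mem_univ i, rfl⟩, ?_⟩
        refine Or.inl ?_
        rw [reinfGraph, SimpleGraph.fromRel_adj]
        exact ⟨by simp [rlit, Ne.symm hbne], Or.inl ⟨rfl, Ne.symm hbne⟩⟩
      · refine ⟨rlit i (t i), Finset.mem_image.mpr ⟨i, Finset.mem_univ i, rfl⟩, ?_⟩
        refine Or.inl ?_
        rw [reinfGraph, SimpleGraph.fromRel_adj]
        exact ⟨by simp [rlit, rvv], Or.inl rfl⟩
      · obtain ⟨k, hk⟩ := ht j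
        refine ⟨rlit (C j k).1 (C j k).2, ?_, ?_⟩
        · refine Finset.mem_image.mpr ⟨(C j k).1, Finset.mem_univ _, ?_⟩
          rw [hk]
        · refine Or.inl ?_
          rw [reinfGraph, SimpleGraph.fromRel_adj]
          exact ⟨by simp [rlit, rcv], Or.inl ⟨k, rfl⟩⟩
      · cases u
        refine ⟨rlit i₀ (t i₀), Finset.mem_image.mpr ⟨i₀, Finset.mem_univ _, rfl⟩, ?_⟩
        refine Or.inr ?_
        rw [SimpleGraph.fromEdgeSet_adj]
        refine ⟨?_, by simp [rlit, rsv]⟩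
        rw [he, Sym2.eq_swap]
        exact Set.mem_singleton _
    have hmem : 1 ∈ S := by
      refine ⟨{e}, ?_, Finset.card_singleton e, ?_⟩
      · intro e' he'
        rw [Finset.mem_singleton] at he'
        subst he'
        constructor
        · rw [he, Sym2.mk_isDiag_iff]
          simp [rsv, rlit]
        · rw [SimpleGraph.mem_edgeSet]
          intro hadj
          rw [reinfGraph, SimpleGraph.fromRel_adj] at hadj
          rcases hadj with ⟨-, h | h⟩
          · exact (h : False)
          · exact (h : False)
      · rw [Finset.coe_singleton]
        have h1 : domNum (reinfGraph C ⊔ SimpleGraph.fromEdgeSet {e}) ≤ n :=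
          le_trans (domNum_le_of_isDomSet hDdom) hDcard
        have h2 : n + 1 ≤ domNum (reinfGraph C) := by
          obtain ⟨D', hD'dom, hD'card⟩ := exists_dom_card (reinfGraph C)
          have := dom_lb hD'dom
          omega
        omega
    have hle : sInf S ≤ 1 := Nat.sInf_le hmem
    have hne : sInf S ≠ 0 := by
      intro h
      have : 0 ∈ S := h ▸ Nat.sInf_mem ⟨1, hmem⟩
      exact h0 this
    rw [reinforcement, ← hS]
    omega

end Thm
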